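/- arXiv:2404.00641 — 4 statements merged into one kernel-verified Lean document; each statement's English description precedes it below -/
import Mathlib

section
/- Let G be a finite group, V a unitary representation of G, and T : V → V a self-adjoint positive semi-definite G-endomorphism. Then the operator norm of T is at most tr(T)/m_V, where m_V is the minimal dimension of an irreducible subrepresentation of V. -/
/-!
The largest eigenvalue `μ` of `T` bounds its operator norm. Since `T` commutes with `ρ`, the
`μ`-eigenspace is a nonzero subrepresentation, so it contains an irreducible one and has dimension
at least `m`. As all eigenvalues of `T` are nonnegative, `tr T ≥ μ · m`.
-/

open Module Finset

namespace LinearMap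

variable {𝕜 E : Type*} [RCLike 𝕜] [NormedAddCommGroup E] [InnerProductSpace 𝕜 E]
  [FiniteDimensional 𝕜 E] {T : E →ₗ[𝕜] E} {n : ℕ}

theorem IsSymmetric.opNorm_le_of_abs_eigenvalues_le (hT : T.IsSymmetric) (hn : finrank 𝕜 E = n)
    {c : ℝ} (hc₀ : 0 ≤ c) (hc : ∀ i, |hT.eigenvalues hn i| ≤ c) :
    ‖T.toContinuousLinearMap‖ ≤ c := by
  refine ContinuousLinearMap.opNorm_le_bound _ hc₀ fun v ↦ ?_
  rw [coe_toContinuousLinearMap']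
  refine le_of_pow_le_pow_left₀ two_ne_zero (by positivity) ?_
  calc ‖T v‖ ^ 2
      = ∑ i, ‖(hT.eigenvalues hn i : 𝕜)‖ ^ 2 * ‖(hT.eigenvectorBasis hn).repr v i‖ ^ 2 := by
        rw [← (hT.eigenvectorBasis hn).repr.norm_map (T v), EuclideanSpace.norm_sq_eq]
        simp only [hT.eigenvectorBasis_apply_self_apply, norm_mul, mul_pow]
    _ ≤ ∑ i, c ^ 2 * ‖(hT.eigenvectorBasis hn).repr v i‖ ^ 2 := by
        gcongr with i
        rw [RCLike.norm_ofReal]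
        exact hc i
    _ = (c * ‖v‖) ^ 2 := by
        rw [← mul_sum, ← EuclideanSpace.norm_sq_eq, (hT.eigenvectorBasis hn).repr.norm_map,
          mul_pow]

theorem IsPositive.opNorm_le_eigenvalues_zero (hT : T.IsPositive) (hn : finrank 𝕜 E = n)
    (h₀ : 0 < n) : ‖T.toContinuousLinearMap‖ ≤ hT.isSymmetric.eigenvalues hn ⟨0, h₀⟩ := by
  refine hT.isSymmetric.opNorm_le_of_abs_eigenvalues_le hn (hT.nonneg_eigenvalues hn _) fun i ↦ ?_
  rw [abs_of_nonneg (hT.nonneg_eigenvalues hn i)]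
  exact hT.isSymmetric.eigenvalues_antitone hn (Nat.zero_le i)

theorem IsPositive.mul_finrank_eigenspace_le_re_trace (hT : T.IsPositive) (μ : ℝ) :
    μ * finrank 𝕜 (End.eigenspace T μ) ≤ RCLike.re (trace 𝕜 E T) := by
  have hn : finrank 𝕜 E = finrank 𝕜 E := rfl
  set ev := hT.isSymmetric.eigenvalues hn
  have hcard : #{i | ev i = μ} = finrank 𝕜 (End.eigenspace T μ) := by
    simp_rw [← hT.isSymmetric.card_filter_eigenvalues_eq hn, RCLike.ofReal_inj, ev]
  calc μ * finrank 𝕜 (End.eigenspace T μ) = ∑ i with ev i = μ, ev i := by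
        rw [← hcard, sum_congr rfl fun i hi ↦ (mem_filter.mp hi).2]
        simp [mul_comm]
    _ ≤ ∑ i, ev i := sum_le_sum_of_subset_of_nonneg (filter_subset _ _)
        fun i _ _ ↦ hT.nonneg_eigenvalues hn i
    _ = RCLike.re (trace 𝕜 E T) := (hT.isSymmetric.re_trace_eq_sum_eigenvalues hn).symm

end LinearMap

namespace Representation

variable {k G V : Type*} [Field k] [Monoid G] [AddCommGroup V] [Module k V]
  [FiniteDimensional k V]

theorem le_finrank_of_invariant (ρ : Representation k G V) (m : ℕ)
    (hmin : ∀ W : Submodule k V, W ≠ ⊥ → (∀ (g : G), ∀ v ∈ W, ρ g v ∈ W) →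
      (∀ W' : Submodule k V, W' ≤ W → W' ≠ ⊥ →
        (∀ (g : G), ∀ v ∈ W', ρ g v ∈ W') → W' = W) →
      m ≤ finrank k W)
    {W : Submodule k V} (hW : W ≠ ⊥) (hWρ : ∀ (g : G), ∀ v ∈ W, ρ g v ∈ W) :
    m ≤ finrank k W := by
  obtain ⟨W₀, ⟨hW₀W, hW₀, hW₀ρ⟩, hW₀min⟩ := wellFounded_lt.has_min
    {W' : Submodule k V | W' ≤ W ∧ W' ≠ ⊥ ∧ ∀ (g : G), ∀ v ∈ W', ρ g v ∈ W'} ⟨W, le_rfl, hW, hWρ⟩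
  refine (hmin W₀ hW₀ hW₀ρ fun W' hW'W₀ hW' hW'ρ ↦ ?_).trans (Submodule.finrank_mono hW₀W)
  by_contra hne
  exact hW₀min W' ⟨hW'W₀.trans hW₀W, hW', hW'ρ⟩ (lt_of_le_of_ne hW'W₀ hne)

end Representation

theorem stmt_1_general (G : Type) [Group G]
    (V : Type) [NormedAddCommGroup V] [InnerProductSpace ℂ V] [FiniteDimensional ℂ V]
    (ρ : G →* (V →ₗ[ℂ] V))
    (T : V →ₗ[ℂ] V)
    (hself : LinearMap.IsSymmetric T)
    (hpos : ∀ v : V, 0 ≤ (inner ℂ (T v) v : ℂ).re)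
    (hcomm : ∀ g : G, T ∘ₗ ρ g = ρ g ∘ₗ T)
    (m : ℕ) (hm : 0 < m)
    (hmin : ∀ W : Submodule ℂ V, W ≠ ⊥ → (∀ (g : G), ∀ v ∈ W, ρ g v ∈ W) →
      (∀ W' : Submodule ℂ V, W' ≤ W → W' ≠ ⊥ →
        (∀ (g : G), ∀ v ∈ W', ρ g v ∈ W') → W' = W) →
      m ≤ finrank ℂ W) :
    ‖LinearMap.toContinuousLinearMap T‖ ≤ (LinearMap.trace ℂ V T).re / m := by
  obtain hV | hV := subsingleton_or_nontrivial V
  · simp [Subsingleton.elim T 0]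
  have hT : T.IsPositive := ⟨hself, hpos⟩
  have hn : 0 < finrank ℂ V := finrank_pos
  set μ := hself.eigenvalues rfl ⟨0, hn⟩
  have hμ : 0 ≤ μ := hT.nonneg_eigenvalues rfl _
  have hmult : m ≤ finrank ℂ (Module.End.eigenspace T μ) :=
    Representation.le_finrank_of_invariant ρ m hmin (hself.hasEigenvalue_eigenvalues rfl _)
      fun g ↦ Module.End.mapsTo_genEigenspace_of_comm (hcomm g) μ 1
  rw [le_div_iff₀ (by exact_mod_cast hm)]
  calc ‖T.toContinuousLinearMap‖ * m ≤ μ * finrank ℂ (Module.End.eigenspace T μ) := by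
        gcongr
        exact hT.opNorm_le_eigenvalues_zero rfl hn
    _ ≤ (LinearMap.trace ℂ V T).re := hT.mul_finrank_eigenspace_le_re_trace μ

/-- Sarnak–Xue type bound: for a unitary representation `ρ` of a finite group `G` on `V`
and a self-adjoint positive semidefinite `G`-endomorphism `T` of `V`, the operator norm
of `T` is at most `tr(T)/m`, where `m` lower-bounds the dimension of every irreducible
subrepresentation of `V`. -/
theorem stmt_1 (G : Type) [Group G] [Finite G]
    (V : Type) [NormedAddCommGroup V] [InnerProductSpace ℂ V] [FiniteDimensional ℂ V]
    (ρ : G →* (V →ₗ[ℂ] V))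
    (hunitary : ∀ (g : G) (v w : V), (inner ℂ (ρ g v) (ρ g w) : ℂ) = inner ℂ v w)
    (T : V →ₗ[ℂ] V)
    (hself : LinearMap.IsSymmetric T)
    (hpos : ∀ v : V, 0 ≤ (inner ℂ (T v) v : ℂ).re)
    (hcomm : ∀ g : G, T ∘ₗ ρ g = ρ g ∘ₗ T)
    (m : ℕ) (hm : 0 < m)
    (hmin : ∀ W : Submodule ℂ V, W ≠ ⊥ → (∀ (g : G), ∀ v ∈ W, ρ g v ∈ W) →
      (∀ W' : Submodule ℂ V, W' ≤ W → W' ≠ ⊥ →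
        (∀ (g : G), ∀ v ∈ W', ρ g v ∈ W') → W' = W) →
      m ≤ finrank ℂ W) :
    ‖LinearMap.toContinuousLinearMap T‖ ≤ (LinearMap.trace ℂ V T).re / m :=
  stmt_1_general G V ρ T hself hpos hcomm m hm hmin
end

section
/- Let v ∈ V be nonzero and define the operator E_v on L²(L(V,W)) by E_v(f) = E_{V'}[e_{V/V'} f], the average over uniformly random codimension-one subspaces V' ≤ V not containing v. Then E_v(f) = Σ_{X ∈ L(W,V) : v ∉ im(X)} q^{-rank(X)} f̂(X) u_X. -/
/-!
Expanding `f = ∑ f̂(X) u_X` (Fourier inversion for the nondegenerate pairing `tr (X ∘ A)`),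
each averaging operator `e_{V/V'}` acts diagonally: the maps `B` vanishing on `V'` pair trivially
with `X` exactly when `im X ≤ V'`, so `e_{V/V'} u_X` is `u_X` or `0` accordingly. Hence the
coefficient of `u_X` in `E_v f` is the fraction of the hyperplanes avoiding `v` that contain `im X`.
These hyperplanes are the kernels of the functionals `ℓ` with `ℓ v = 1`, an affine space of
dimension `n - 1`, and containing `im X` cuts it down to an affine subspace of dimension
`n - 1 - rank X` (empty when `v ∈ im X`); the fraction is therefore `q ^ (-rank X)`.
-/

open scoped ComplexConjugate Classical
open LinearMap

variable {F V W : Type} [Field F] [Fintype F]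
  [AddCommGroup V] [Module F V] [Fintype V]
  [AddCommGroup W] [Module F W] [Fintype W]

/-- The character `u_X(A) = φ(tr(X ∘ A))` of the bilinear scheme `L(V,W)`. -/
noncomputable def uChar (φ : AddChar F ℂ) (X : W →ₗ[F] V) (A : V →ₗ[F] W) : ℂ :=
  φ (LinearMap.trace F V (X ∘ₗ A))

/-- Fourier coefficient `f̂(X) = ⟨f, u_X⟩`. -/
noncomputable def fHat [Fintype (V →ₗ[F] W)] (φ : AddChar F ℂ)
    (f : (V →ₗ[F] W) → ℂ) (X : W →ₗ[F] V) : ℂ :=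
  (∑ A : V →ₗ[F] W, f A * conj (uChar φ X A)) / (Fintype.card (V →ₗ[F] W) : ℂ)

/-- The averaging operator `e_{V/V'}` on `L²(L(V,W))`. -/
noncomputable def eAvg [Fintype (V →ₗ[F] W)] (V' : Submodule F V)
    (f : (V →ₗ[F] W) → ℂ) (A : V →ₗ[F] W) : ℂ :=
  (∑ B ∈ Finset.univ.filter (fun B : V →ₗ[F] W => ∀ v ∈ V', B v = 0), f (A + B)) /
    ((Finset.univ.filter (fun B : V →ₗ[F] W => ∀ v ∈ V', B v = 0)).card : ℂ)

open Finset

section Hyperplanes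

variable {K U : Type*} [Field K] [AddCommGroup U] [Module K U]

lemma exists_dual_eq_one_of_notMem {p : Submodule K U} {y : U} (hy : y ∉ p) :
    ∃ ℓ : Module.Dual K U, ℓ y = 1 ∧ p ≤ ker ℓ := by
  obtain ⟨f, hfy, hpf⟩ := p.exists_dual_map_eq_bot_of_notMem hy inferInstance
  refine ⟨(f y)⁻¹ • f, inv_mul_cancel₀ hfy, ?_⟩
  rwa [ker_smul _ _ (inv_ne_zero hfy), le_ker_iff_map]

lemma mem_dualAnnihilator_sup_span_singleton {R : Submodule K U} {v : U} (ℓ : Module.Dual K U) :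
    ℓ ∈ (R ⊔ K ∙ v).dualAnnihilator ↔ ℓ v = 0 ∧ R ≤ ker ℓ := by
  rw [Submodule.mem_dualAnnihilator]
  change R ⊔ K ∙ v ≤ ker ℓ ↔ _
  rw [sup_le_iff, Submodule.span_singleton_le_iff_mem, mem_ker, and_comm]

variable [FiniteDimensional K U]

lemma card_dual_apply_eq_one_le_ker [Fintype K] [Fintype (Module.Dual K U)] {v : U}
    {R : Submodule K U} (hvR : v ∉ R) :
    #{ℓ : Module.Dual K U | ℓ v = 1 ∧ R ≤ ker ℓ}
      = Fintype.card K ^ (Module.finrank K U - 1 - Module.finrank K R) := by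
  obtain ⟨ℓ₀, hℓ₀v, hℓ₀R⟩ := exists_dual_eq_one_of_notMem hvR
  set S := R ⊔ K ∙ v
  have hS := Subspace.finrank_add_finrank_dualAnnihilator_eq S
  rw [Submodule.finrank_sup_span_singleton hvR] at hS
  calc #{ℓ : Module.Dual K U | ℓ v = 1 ∧ R ≤ ker ℓ}
      = #{e : Module.Dual K U | e ∈ S.dualAnnihilator} := by
        refine card_nbij' (· - ℓ₀) (· + ℓ₀) ?_ ?_ (fun _ _ => sub_add_cancel _ _)
          (fun _ _ => add_sub_cancel_right _ _)
        · intro ℓ hℓ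
          rw [mem_coe, mem_filter] at hℓ ⊢
          refine ⟨mem_univ _, (mem_dualAnnihilator_sup_span_singleton _).mpr
            ⟨by simp [hℓ.2.1, hℓ₀v], fun r hr => ?_⟩⟩
          simp [mem_ker.mp (hℓ.2.2 hr), mem_ker.mp (hℓ₀R hr)]
        · intro e he
          rw [mem_coe, mem_filter] at he ⊢
          obtain ⟨hev, heR⟩ := (mem_dualAnnihilator_sup_span_singleton e).mp he.2
          refine ⟨mem_univ _, by simp [hev, hℓ₀v], fun r hr => ?_⟩
          simp [mem_ker.mp (heR hr), mem_ker.mp (hℓ₀R hr)]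
    _ = Fintype.card S.dualAnnihilator := (Fintype.card_subtype _).symm
    _ = _ := by rw [Module.card_eq_pow_finrank (K := K)]; congr 1; omega

variable (K) in
noncomputable def hyperplanesAvoiding [Fintype (Submodule K U)] (v : U) : Finset (Submodule K U) :=
  univ.filter fun V' => Module.finrank K V' + 1 = Module.finrank K U ∧ v ∉ V'

lemma card_hyperplanesAvoiding_filter_le [Fintype K] [Fintype (Submodule K U)] {v : U}
    {R : Submodule K U} (hvR : v ∉ R) :
    #{V' ∈ hyperplanesAvoiding K v | R ≤ V'}
      = Fintype.card K ^ (Module.finrank K U - 1 - Module.finrank K R) := by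
  have : Fintype (Module.Dual K U) :=
    have := Module.finite_of_finite K (M := Module.Dual K U)
    Fintype.ofFinite _
  rw [← card_dual_apply_eq_one_le_ker hvR]
  symm
  refine card_nbij (fun ℓ => ker ℓ) ?_ ?_ ?_
  · intro ℓ hℓ
    rw [mem_coe, mem_filter] at hℓ
    rw [mem_coe, mem_filter, hyperplanesAvoiding, mem_filter]
    have hℓ0 : ℓ ≠ 0 := by rintro rfl; simp at hℓ
    exact ⟨⟨mem_univ _, Module.Dual.finrank_ker_add_one_of_ne_zero hℓ0, by simp [hℓ.2.1]⟩, hℓ.2.2⟩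
  · intro ℓ₁ hℓ₁ ℓ₂ hℓ₂ h
    rw [mem_coe, mem_filter] at hℓ₁ hℓ₂
    exact Module.Dual.eq_of_ker_eq_of_apply_eq v h (hℓ₁.2.1.trans hℓ₂.2.1.symm) (by simp [hℓ₁.2.1])
  · intro V' hV'
    rw [mem_coe, mem_filter, hyperplanesAvoiding, mem_filter] at hV'
    obtain ⟨⟨-, hdim, hvV'⟩, hRV'⟩ := hV'
    obtain ⟨ℓ, hℓv, hV'ℓ⟩ := exists_dual_eq_one_of_notMem hvV'
    have hℓ0 : ℓ ≠ 0 := by rintro rfl; simp at hℓv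
    have hker : V' = ker ℓ := Submodule.eq_of_le_of_finrank_eq hV'ℓ
      (by have := Module.Dual.finrank_ker_add_one_of_ne_zero hℓ0; omega)
    exact ⟨ℓ, by rw [mem_coe, mem_filter]; exact ⟨mem_univ _, hℓv, hker ▸ hRV'⟩, hker.symm⟩

lemma card_filter_le_div_card_hyperplanesAvoiding [Fintype K] [Fintype (Submodule K U)] {v : U}
    {R : Submodule K U} (hvR : v ∉ R) :
    (#{V' ∈ hyperplanesAvoiding K v | R ≤ V'} : ℂ) / #(hyperplanesAvoiding K v)
      = ((Fintype.card K : ℂ) ^ Module.finrank K R)⁻¹ := by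
  have hv : v ∉ (⊥ : Submodule K U) := fun h => hvR ((bot_le : ⊥ ≤ R) h)
  have hR : Module.finrank K R < Module.finrank K U :=
    Submodule.finrank_lt (s := R) (by rintro rfl; exact hvR Submodule.mem_top)
  have hq : (Fintype.card K : ℂ) ≠ 0 := by exact_mod_cast Fintype.card_ne_zero
  have hall := card_hyperplanesAvoiding_filter_le hv
  rw [filter_true_of_mem fun _ _ => bot_le, finrank_bot] at hall
  obtain ⟨d, hd⟩ : ∃ d, Module.finrank K U - 1 = d + Module.finrank K R :=
    ⟨_, (Nat.sub_add_cancel (by omega)).symm⟩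
  rw [card_hyperplanesAvoiding_filter_le hvR, hall, Nat.sub_zero, hd, Nat.add_sub_cancel]
  push_cast
  rw [pow_add, div_mul_cancel_left₀ (pow_ne_zero _ hq)]

end Hyperplanes

section Characters

variable {K M R : Type*} [Field K] [AddCommGroup M] [Module K M] [CommRing R] {φ : AddChar K R}

lemma AddChar.compAddMonoidHom_dual_eq_zero_iff (hφ : φ ≠ 1) (ℓ : Module.Dual K M) :
    φ.compAddMonoidHom ℓ.toAddMonoidHom = 0 ↔ ℓ = 0 := by
  refine ⟨fun h => ?_, fun h => by ext m; simp [h]⟩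
  by_contra hℓ
  obtain ⟨m, hm⟩ : ∃ m, ℓ m ≠ 0 := by simpa [LinearMap.ext_iff] using hℓ
  obtain ⟨t, ht⟩ := AddChar.ne_one_iff.mp hφ
  apply ht
  simpa [hm] using DFunLike.congr_fun h ((t / ℓ m) • m)

variable [IsDomain R] [Fintype M]

lemma AddChar.sum_dual_apply_eq_ite (hφ : φ ≠ 1) (ℓ : Module.Dual K M) :
    ∑ m, φ (ℓ m) = if ℓ = 0 then (Fintype.card M : R) else 0 := by
  simpa [AddChar.compAddMonoidHom_dual_eq_zero_iff hφ] using
    AddChar.sum_eq_ite (φ.compAddMonoidHom ℓ.toAddMonoidHom)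

lemma AddChar.sum_filter_mem_dual_apply_eq_ite (hφ : φ ≠ 1) (P : Submodule K M)
    (ℓ : Module.Dual K M) :
    ∑ m ∈ univ.filter (· ∈ P), φ (ℓ m)
      = if P ≤ ker ℓ then (#(univ.filter (· ∈ P)) : R) else 0 := by
  rw [sum_subtype _ (fun _ => mem_filter_univ _) (fun m => φ (ℓ m)), ← Fintype.card_subtype,
    le_ker_iff_comp_subtype_eq_zero]
  exact (AddChar.sum_dual_apply_eq_ite hφ (ℓ ∘ₗ P.subtype)).trans (by congr)

end Characters

section TracePairing

variable {K U U' : Type*} [Field K] [AddCommGroup U] [Module K U] [FiniteDimensional K U]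
  [AddCommGroup U'] [Module K U']

lemma trace_comp_smulRight (X : U' →ₗ[K] U) (ℓ : Module.Dual K U) (w : U') :
    trace K U (X ∘ₗ ℓ.smulRight w) = ℓ (X w) := by
  rw [show X ∘ₗ ℓ.smulRight w = ℓ.smulRight (X w) by ext; simp, trace_smulRight]

variable [FiniteDimensional K U']

lemma forall_trace_comp_eq_zero_iff_range_le (X : U' →ₗ[K] U) (V' : Submodule K U) :
    (∀ B : U →ₗ[K] U', V' ≤ ker B → trace K U (X ∘ₗ B) = 0) ↔ range X ≤ V' := by
  refine ⟨fun h => ?_, fun h B hB => ?_⟩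
  · by_contra hX
    obtain ⟨_, ⟨w, rfl⟩, hw⟩ := SetLike.not_le_iff_exists.mp hX
    obtain ⟨ℓ, hℓ, hV'ℓ⟩ := exists_dual_eq_one_of_notMem hw
    have := h (ℓ.smulRight w) fun x hx => by simp [mem_ker.mp (hV'ℓ hx)]
    rw [trace_comp_smulRight, hℓ] at this
    exact one_ne_zero this
  · rw [trace_comp_comm', show B ∘ₗ X = 0 by ext w; exact hB (h ⟨w, rfl⟩), map_zero]

lemma forall_trace_comp_eq_zero_iff (C : U →ₗ[K] U') :
    (∀ X : U' →ₗ[K] U, trace K U (X ∘ₗ C) = 0) ↔ C = 0 := by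
  simpa [trace_comp_comm' C, range_eq_bot] using
    forall_trace_comp_eq_zero_iff_range_le (K := K) C ⊥

lemma sum_addChar_trace_comp {R : Type*} [CommRing R] [IsDomain R] {φ : AddChar K R}
    (hφ : φ ≠ 1) [Fintype (U' →ₗ[K] U)] (C : U →ₗ[K] U') :
    ∑ X : U' →ₗ[K] U, φ (trace K U (X ∘ₗ C))
      = if C = 0 then (Fintype.card (U' →ₗ[K] U) : R) else 0 := by
  have hC : trace K U ∘ₗ lcomp K U C = 0 ↔ C = 0 := by
    rw [← forall_trace_comp_eq_zero_iff C, LinearMap.ext_iff]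
    rfl
  exact (AddChar.sum_dual_apply_eq_ite hφ (trace K U ∘ₗ lcomp K U C)).trans (by simp only [hC])

end TracePairing

section Fourier

variable [Fintype (V →ₗ[F] W)] {φ : AddChar F ℂ}

omit [Fintype F] in
lemma eAvg_uChar (hφ : φ ≠ 1) (V' : Submodule F V) (X : W →ₗ[F] V) (A : V →ₗ[F] W) :
    eAvg V' (uChar φ X) A = if range X ≤ V' then uChar φ X A else 0 := by
  set P : Submodule F (V →ₗ[F] W) := ker (lcomp F W V'.subtype)
  have mem_P : ∀ B, B ∈ P ↔ ∀ v ∈ V', B v = 0 := fun B =>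
    le_ker_iff_comp_subtype_eq_zero.symm
  have hS : univ.filter (fun B : V →ₗ[F] W => ∀ v ∈ V', B v = 0) = univ.filter (· ∈ P) :=
    filter_congr fun B _ => (mem_P B).symm
  have hP : P ≤ ker (trace F V ∘ₗ compRight F X) ↔ range X ≤ V' := by
    rw [← forall_trace_comp_eq_zero_iff_range_le]
    exact forall_congr' fun B => imp_congr (mem_P B) Iff.rfl
  have hcard : (#(univ.filter (· ∈ P)) : ℂ) ≠ 0 := by
    exact_mod_cast (card_pos.mpr ⟨0, mem_filter.mpr ⟨mem_univ _, P.zero_mem⟩⟩).ne'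
  have hsum : ∑ B ∈ univ.filter (· ∈ P), φ (trace F V (X ∘ₗ B))
      = if range X ≤ V' then (#(univ.filter (· ∈ P)) : ℂ) else 0 := by
    rw [← hP]
    exact AddChar.sum_filter_mem_dual_apply_eq_ite hφ P (trace F V ∘ₗ compRight F X)
  simp only [eAvg, hS, uChar, comp_add, map_add, AddChar.map_add_eq_mul, ← mul_sum]
  rw [hsum, mul_ite, mul_zero, ite_div, zero_div, mul_div_cancel_right₀ _ hcard]

variable [Fintype (W →ₗ[F] V)]

lemma sum_fHat_mul_uChar (hφ : φ ≠ 1) (f : (V →ₗ[F] W) → ℂ) (A : V →ₗ[F] W) :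
    ∑ X, fHat φ f X * uChar φ X A = f A := by
  have hcard : Fintype.card (W →ₗ[F] V) = Fintype.card (V →ₗ[F] W) := by
    rw [Module.card_eq_pow_finrank (K := F) (V := W →ₗ[F] V),
      Module.card_eq_pow_finrank (K := F) (V := V →ₗ[F] W),
      Module.finrank_linearMap, Module.finrank_linearMap, mul_comm]
  have hL : (Fintype.card (V →ₗ[F] W) : ℂ) ≠ 0 := Nat.cast_ne_zero.mpr Fintype.card_ne_zero
  have hu : ∀ X A', conj (uChar φ X A') * uChar φ X A = φ (trace F V (X ∘ₗ (A - A'))) := by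
    intro X A'
    rw [uChar, uChar, ← AddChar.map_neg_eq_conj, ← AddChar.map_add_eq_mul, comp_sub, map_sub,
      neg_add_eq_sub]
  calc ∑ X, fHat φ f X * uChar φ X A
      = (∑ A', f A' * ∑ X, φ (trace F V (X ∘ₗ (A - A')))) / Fintype.card (V →ₗ[F] W) := by
        simp only [fHat, div_mul_eq_mul_div, sum_mul, mul_assoc, hu]
        rw [← sum_div, sum_comm]
        simp only [← mul_sum]
    _ = f A := by
        simp only [sum_addChar_trace_comp hφ, sub_eq_zero, mul_ite, mul_zero, sum_ite_eq,
          mem_univ, if_true, hcard]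
        field_simp

lemma eAvg_eq_sum_fHat_mul_uChar (hφ : φ ≠ 1) (V' : Submodule F V) (f : (V →ₗ[F] W) → ℂ)
    (A : V →ₗ[F] W) :
    eAvg V' f A = ∑ X ∈ univ.filter (fun X : W →ₗ[F] V => range X ≤ V'),
      fHat φ f X * uChar φ X A := by
  have hlin : eAvg V' f A = ∑ X, fHat φ f X * eAvg V' (uChar φ X) A := by
    have hf : ∀ B, f (A + B) = ∑ X, fHat φ f X * uChar φ X (A + B) := fun B =>
      (sum_fHat_mul_uChar hφ f _).symm
    simp only [eAvg, hf, mul_sum, sum_div, mul_div_assoc]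
    exact sum_comm
  simp only [hlin, eAvg_uChar hφ, mul_ite, mul_zero, sum_filter]

end Fourier

theorem stmt_4_general [Fintype (V →ₗ[F] W)] [Fintype (W →ₗ[F] V)] [Fintype (Submodule F V)]
    (φ : AddChar F ℂ) (hφ : φ ≠ 1)
    (v : V) (f : (V →ₗ[F] W) → ℂ) (A : V →ₗ[F] W) :
    (∑ V' ∈ Finset.univ.filter
          (fun V' : Submodule F V =>
            Module.finrank F V' + 1 = Module.finrank F V ∧ v ∉ V'),
        eAvg V' f A) /
        ((Finset.univ.filter
          (fun V' : Submodule F V =>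
            Module.finrank F V' + 1 = Module.finrank F V ∧ v ∉ V')).card : ℂ) =
      ∑ X ∈ Finset.univ.filter (fun X : W →ₗ[F] V => v ∉ LinearMap.range X),
        ((Fintype.card F : ℂ) ^ Module.finrank F (LinearMap.range X))⁻¹ *
          fHat φ f X * uChar φ X A := by
  change (∑ V' ∈ hyperplanesAvoiding F v, eAvg V' f A) / #(hyperplanesAvoiding F v) = _
  simp only [eAvg_eq_sum_fHat_mul_uChar hφ]
  rw [sum_comm' (t' := univ)
    (s' := fun X : W →ₗ[F] V => {V' ∈ hyperplanesAvoiding F v | range X ≤ V'})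
    (fun _ _ => by simp only [mem_filter, mem_univ, and_true, true_and])]
  simp only [sum_const, nsmul_eq_mul, sum_div, sum_filter]
  refine sum_congr rfl fun X _ => ?_
  split_ifs with hX
  · rw [filter_false_of_mem fun V' hV' hXV' => (mem_filter.mp hV').2.2 (hXV' hX), card_empty,
      Nat.cast_zero, zero_mul, zero_div]
  · rw [mul_div_right_comm, card_filter_le_div_card_hyperplanesAvoiding hX, mul_assoc]

/-- For `0 ≠ v ∈ V`, the operator `E_v(f) = 𝔼_{V'}[e_{V/V'} f]` (average over uniformly
random codimension-one subspaces `V'` not containing `v`) satisfies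
`E_v(f) = ∑_{X : v ∉ im X} q^{-rank X} f̂(X) u_X`. -/
theorem stmt_4 [Fintype (V →ₗ[F] W)] [Fintype (W →ₗ[F] V)] [Fintype (Submodule F V)]
    (φ : AddChar F ℂ) (hφ : φ ≠ 1)
    (v : V) (hv : v ≠ 0) (f : (V →ₗ[F] W) → ℂ) (A : V →ₗ[F] W) :
    (∑ V' ∈ Finset.univ.filter
          (fun V' : Submodule F V =>
            Module.finrank F V' + 1 = Module.finrank F V ∧ v ∉ V'),
        eAvg V' f A) /
        ((Finset.univ.filter
          (fun V' : Submodule F V =>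
            Module.finrank F V' + 1 = Module.finrank F V ∧ v ∉ V')).card : ℂ) =
      ∑ X ∈ Finset.univ.filter (fun X : W →ₗ[F] V => v ∉ LinearMap.range X),
        ((Fintype.card F : ℂ) ^ Module.finrank F (LinearMap.range X))⁻¹ *
          fHat φ f X * uChar φ X A :=
  stmt_4_general φ hφ v f A
end

section
/- For v ∈ V nonzero, let B_v be the distribution on L(V,W) of w⊗φ where w is uniform in W and φ is uniform among functionals in V* with φ(v)=1 (identifying W⊗V* with L(V,W)). Then for any f ∈ L²(L(V,W)) and A ∈ L(V,W), E_v(f)(A) = E_{B∼B_v}[f(A+B)], where E_v is the average of e_{V/V'} over codimension-one V' not containing v. -/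
open scoped Classical
open LinearMap

variable {F V W : Type} [Field F] [Fintype F]
  [AddCommGroup V] [Module F V] [Fintype V]
  [AddCommGroup W] [Module F W] [Fintype W]

/-!
A hyperplane `V'` with `v ∉ V'` is the kernel of exactly one functional `ψ` with `ψ v = 1`,
and the maps vanishing on `ker ψ` are exactly the maps `ψ.smulRight w`, `w ∈ W`, since such a
map is determined by its value at `v`. Hence `e_{V/V'}` averages `f (A + ψ.smulRight w)`
over `w`, and averaging over `V'` amounts to averaging over `ψ`.
-/

namespace Module.Dual

theorem smulRight_apply_eq_of_ker_le {R M N : Type*} [CommRing R] [AddCommGroup M]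
    [Module R M] [AddCommGroup N] [Module R N] {ψ : Module.Dual R M} {v : M} (hψ : ψ v = 1)
    {B : M →ₗ[R] N} (hB : ker ψ ≤ ker B) : ψ.smulRight (B v) = B := by
  ext x
  have hx : x - ψ x • v ∈ ker ψ := by simp [hψ]
  have h0 : B (x - ψ x • v) = 0 := hB hx
  rw [map_sub, map_smul, sub_eq_zero] at h0
  exact h0.symm

theorem bijOn_smulRight {R M N : Type*} [CommRing R] [AddCommGroup M] [Module R M]
    [AddCommGroup N] [Module R N] {ψ : Module.Dual R M} {v : M} (hψ : ψ v = 1) :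
    Set.BijOn (fun w : N => ψ.smulRight w) Set.univ {B | ∀ x ∈ ker ψ, B x = 0} := by
  refine ⟨fun w _ x hx => by simp [mem_ker.1 hx], fun w₁ _ w₂ _ h => ?_, fun B hB => ?_⟩
  · simpa [hψ] using LinearMap.congr_fun h v
  · exact ⟨B v, Set.mem_univ _, smulRight_apply_eq_of_ker_le hψ hB⟩

theorem bijOn_ker {K M : Type*} [Field K] [AddCommGroup M] [Module K M]
    [FiniteDimensional K M] (v : M) :
    Set.BijOn (fun ψ : Module.Dual K M => ker ψ) {ψ | ψ v = 1}
      {V' | Module.finrank K V' + 1 = Module.finrank K M ∧ v ∉ V'} := by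
  refine ⟨fun ψ (hψ : ψ v = 1) => ?_, fun ψ₁ (h₁ : ψ₁ v = 1) ψ₂ (h₂ : ψ₂ v = 1) hker => ?_,
    fun V' ⟨hrank, hv⟩ => ?_⟩
  · have hne : ψ ≠ 0 := fun h => by simp [h] at hψ
    exact ⟨finrank_ker_add_one_of_ne_zero hne, by simp [hψ]⟩
  · exact eq_of_ker_eq_of_apply_eq v hker (h₁.trans h₂.symm) (by simp [h₁])
  · obtain ⟨φ, hφv, hφ⟩ := V'.exists_dual_map_eq_bot_of_notMem hv inferInstance
    have hle : V' ≤ ker φ := le_ker_iff_map.2 hφ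
    have hne : φ ≠ 0 := fun h => by simp [h] at hφv
    have hker : V' = ker φ := Submodule.eq_of_le_of_finrank_eq hle
      (by have := finrank_ker_add_one_of_ne_zero hne; omega)
    refine ⟨(φ v)⁻¹ • φ, by simp [hφv], ?_⟩
    simp only [ker_smul φ _ (inv_ne_zero hφv), hker]

end Module.Dual

theorem eAvg_ker_eq {F V W : Type} [Field F] [AddCommGroup V] [Module F V] [Fintype V]
    [AddCommGroup W] [Module F W] [Fintype W] [Fintype (V →ₗ[F] W)]
    {ψ : Module.Dual F V} {v : V} (hψ : ψ v = 1) (f : (V →ₗ[F] W) → ℂ) (A : V →ₗ[F] W) :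
    eAvg (ker ψ) f A = (∑ w : W, f (A + ψ.smulRight w)) / (Fintype.card W : ℂ) := by
  have hbij : Set.BijOn (fun w : W => ψ.smulRight w) (Finset.univ : Finset W)
      (Finset.univ.filter fun B : V →ₗ[F] W => ∀ x ∈ ker ψ, B x = 0) := by
    simpa using Module.Dual.bijOn_smulRight (N := W) hψ
  have hsum := Finset.sum_nbij (f := fun w => f (A + ψ.smulRight w)) (g := fun B => f (A + B)) _
    (fun _ h => hbij.mapsTo h) hbij.injOn hbij.surjOn fun _ _ => rfl
  have hcard := Finset.card_nbij _ (fun _ h => hbij.mapsTo h) hbij.injOn hbij.surjOn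
  rw [eAvg, ← hsum, ← hcard, Finset.card_univ]

theorem stmt_6_general [Fintype (V →ₗ[F] W)] [Fintype (Submodule F V)]
    [Fintype (Module.Dual F V)]
    (v : V) (f : (V →ₗ[F] W) → ℂ) (A : V →ₗ[F] W) :
    (∑ V' ∈ Finset.univ.filter
          (fun V' : Submodule F V =>
            Module.finrank F V' + 1 = Module.finrank F V ∧ v ∉ V'),
        eAvg V' f A) /
        ((Finset.univ.filter
          (fun V' : Submodule F V =>
            Module.finrank F V' + 1 = Module.finrank F V ∧ v ∉ V')).card : ℂ) =
      (∑ w : W, ∑ ψ ∈ Finset.univ.filter (fun ψ : Module.Dual F V => ψ v = 1),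
          f (A + ψ.smulRight w)) /
        ((Fintype.card W : ℂ) *
          ((Finset.univ.filter (fun ψ : Module.Dual F V => ψ v = 1)).card : ℂ)) := by
  set Sψ := Finset.univ.filter (fun ψ : Module.Dual F V => ψ v = 1)
  have hbij : Set.BijOn (fun ψ : Module.Dual F V => ker ψ) Sψ
      (Finset.univ.filter fun V' : Submodule F V =>
        Module.finrank F V' + 1 = Module.finrank F V ∧ v ∉ V') := by
    simpa [Sψ] using Module.Dual.bijOn_ker (K := F) v
  rw [← Finset.sum_nbij _ (fun _ h => hbij.mapsTo h) hbij.injOn hbij.surjOn fun _ _ => rfl,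
    ← Finset.card_nbij _ (fun _ h => hbij.mapsTo h) hbij.injOn hbij.surjOn,
    Finset.sum_congr rfl fun ψ hψ => eAvg_ker_eq (Finset.mem_filter.1 hψ).2 f A,
    ← Finset.sum_div, Finset.sum_comm, div_div, mul_comm]

/-- For `v ≠ 0`, the operator `E_v` (average of `e_{V/V'}` over codimension-one `V'`
not containing `v`) coincides with averaging over the distribution `B_v`:
`E_v(f)(A) = 𝔼_{w, ψ}[f(A + ψ ⊗ w)]` where `w` is uniform in `W` and `ψ` is uniform
among the functionals with `ψ(v) = 1`. -/
theorem stmt_6 [Fintype (V →ₗ[F] W)] [Fintype (Submodule F V)]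
    [Fintype (Module.Dual F V)]
    (v : V) (hv : v ≠ 0) (f : (V →ₗ[F] W) → ℂ) (A : V →ₗ[F] W) :
    (∑ V' ∈ Finset.univ.filter
          (fun V' : Submodule F V =>
            Module.finrank F V' + 1 = Module.finrank F V ∧ v ∉ V'),
        eAvg V' f A) /
        ((Finset.univ.filter
          (fun V' : Submodule F V =>
            Module.finrank F V' + 1 = Module.finrank F V ∧ v ∉ V')).card : ℂ) =
      (∑ w : W, ∑ ψ ∈ Finset.univ.filter (fun ψ : Module.Dual F V => ψ v = 1),
          f (A + ψ.smulRight w)) /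
        ((Fintype.card W : ℂ) *
          ((Finset.univ.filter (fun ψ : Module.Dual F V => ψ v = 1)).card : ℂ)) :=
  stmt_6_general v f A
end

section
/- Let G = SL_n(F_q) (or GL_n(F_q)) and let f ∈ L²(G) be a d-junta, i.e., there is a d-dimensional subspace U ≤ V = F_q^n and a function g on the rank-d maps in L(U,V) with f(A) = g(A|_U) for all A ∈ G. Then (|G|/|L(V,V)|)·‖f‖₂ ≤ ‖j(f)^{≤d}‖₂, where j(f) extends f by zero to L(V,V) and j(f)^{≤d} is its Fourier projection onto characters of rank ≤ d, and the 2-norms are with respect to the uniform measures on G and L(V,V) respectively. -/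
open scoped ComplexConjugate Classical
open Matrix

variable {F : Type} [Field F] [Fintype F] [DecidableEq F] {n : ℕ}

/-- The character `u_X(A) = φ(tr(X·A))` on the matrix space `L(V,V)`. -/
noncomputable def uMat (φ : AddChar F ℂ) (X A : Matrix (Fin n) (Fin n) F) : ℂ :=
  φ ((X * A).trace)

/-- Fourier coefficient of `g : L(V,V) → ℂ`. -/
noncomputable def matHat (φ : AddChar F ℂ) (g : Matrix (Fin n) (Fin n) F → ℂ)
    (X : Matrix (Fin n) (Fin n) F) : ℂ :=
  (∑ A : Matrix (Fin n) (Fin n) F, g A * conj (uMat φ X A)) /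
    (Fintype.card (Matrix (Fin n) (Fin n) F) : ℂ)

/-- The extension by zero `j(f)` of `f : SL_n(F) → ℂ` to all of `L(V,V)`. -/
noncomputable def jExt (f : Matrix.SpecialLinearGroup (Fin n) F → ℂ)
    (A : Matrix (Fin n) (Fin n) F) : ℂ :=
  if h : A.det = 1 then f ⟨A, h⟩ else 0

private lemma sum_eq_zero_of_mul {A : Type} [AddCommGroup A] [Fintype A]
    (gf : A → ℂ) (x₀ : A) (c : ℂ) (hc : c ≠ 1)
    (hmul : ∀ x, gf (x + x₀) = c * gf x) : ∑ x : A, gf x = 0 := by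
  have h1 : ∑ x : A, gf x = ∑ x : A, gf (x + x₀) :=
    (Fintype.sum_equiv (Equiv.addRight x₀) _ _ (fun x => rfl)).symm
  have h2 : ∑ x : A, gf x = c * ∑ x : A, gf x := by
    conv_lhs => rw [h1]
    simp_rw [hmul]; rw [← Finset.mul_sum]
  have h3 : (c - 1) * ∑ x : A, gf x = 0 := by rw [sub_mul, one_mul, ← h2, sub_self]
  rcases mul_eq_zero.mp h3 with h | h
  · exact absurd (sub_eq_zero.mp h) hc
  · exact h

private lemma sum_char_lin {A : Type} [AddCommGroup A] [Fintype A] (φ : AddChar F ℂ)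
    (ℓ : A → F) (hadd : ∀ a b, ℓ (a + b) = ℓ a + ℓ b) (x₀ : A) (h0 : φ (ℓ x₀) ≠ 1) :
    ∑ x : A, φ (ℓ x) = 0 :=
  sum_eq_zero_of_mul _ x₀ _ h0 (fun x => by
    show φ (ℓ (x + x₀)) = _
    rw [hadd, AddChar.map_add_eq_mul, mul_comm])

private lemma sum_char_trace_eq_zero (φ : AddChar F ℂ) (hφ : φ ≠ 1)
    {D : Matrix (Fin n) (Fin n) F} (hD : D ≠ 0) :
    ∑ X : Matrix (Fin n) (Fin n) F, φ ((X * D).trace) = 0 := by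
  obtain ⟨t, ht⟩ := AddChar.ne_one_iff.mp hφ
  have hij : ∃ i j, D i j ≠ 0 := by
    by_contra h; push_neg at h; exact hD (by ext i j; simp [h])
  obtain ⟨i, j, hij⟩ := hij
  have htr : (Matrix.single j i (t * (D i j)⁻¹) * D).trace = t := by
    rw [Matrix.trace, Finset.sum_eq_single j]
    · rw [Matrix.diag_apply, Matrix.single_mul_apply_same,
        mul_assoc, inv_mul_cancel₀ hij, mul_one]
    · intro b _ hb
      rw [Matrix.diag_apply, Matrix.single_mul_apply_of_ne (t * (D i j)⁻¹) j i b b hb D]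
    · intro h; exact absurd (Finset.mem_univ j) h
  refine sum_char_lin φ (fun X => (X * D).trace)
    (fun a b => by show ((a + b) * D).trace = _; rw [add_mul, Matrix.trace_add])
    (Matrix.single j i (t * (D i j)⁻¹)) ?_
  show φ ((Matrix.single j i (t * (D i j)⁻¹) * D).trace) ≠ 1
  rw [htr]; exact ht

private lemma sum_conj_char_mul (φ : AddChar F ℂ) (hφ : φ ≠ 1)
    (A B : Matrix (Fin n) (Fin n) F) :
    ∑ X : Matrix (Fin n) (Fin n) F, conj (uMat φ X A) * uMat φ X B
      = if B = A then (Fintype.card (Matrix (Fin n) (Fin n) F) : ℂ) else 0 := by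
  have key : ∀ X : Matrix (Fin n) (Fin n) F,
      conj (uMat φ X A) * uMat φ X B = φ ((X * (B - A)).trace) := by
    intro X
    rw [uMat, uMat, ← AddChar.map_neg_eq_conj, ← AddChar.map_add_eq_mul]
    congr 1
    rw [Matrix.mul_sub, Matrix.trace_sub]; ring
  simp_rw [key]
  split_ifs with h
  · subst h
    simp only [sub_self, Matrix.mul_zero, Matrix.trace_zero, AddChar.map_zero_eq_one]
    rw [Finset.sum_const, Finset.card_univ, nsmul_eq_mul, mul_one]
  · exact sum_char_trace_eq_zero φ hφ (sub_ne_zero.mpr h)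

private lemma plancherel (φ : AddChar F ℂ) (hφ : φ ≠ 1)
    (a b : Matrix (Fin n) (Fin n) F → ℂ) :
    ∑ X : Matrix (Fin n) (Fin n) F,
        (∑ A : Matrix (Fin n) (Fin n) F, a A * conj (uMat φ X A)) *
          conj (∑ B : Matrix (Fin n) (Fin n) F, b B * conj (uMat φ X B))
      = (Fintype.card (Matrix (Fin n) (Fin n) F) : ℂ) *
          ∑ A : Matrix (Fin n) (Fin n) F, a A * conj (b A) := by
  have step1 : ∀ X : Matrix (Fin n) (Fin n) F,
      (∑ A : Matrix (Fin n) (Fin n) F, a A * conj (uMat φ X A)) *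
          conj (∑ B : Matrix (Fin n) (Fin n) F, b B * conj (uMat φ X B))
        = ∑ A : Matrix (Fin n) (Fin n) F, ∑ B : Matrix (Fin n) (Fin n) F,
            (a A * conj (b B)) * (conj (uMat φ X A) * uMat φ X B) := by
    intro X
    rw [map_sum, Finset.sum_mul_sum]
    refine Finset.sum_congr rfl fun A _ => Finset.sum_congr rfl fun B _ => ?_
    rw [_root_.map_mul, Complex.conj_conj]; ring
  simp_rw [step1]
  rw [Finset.sum_comm]
  have step2 : ∀ A : Matrix (Fin n) (Fin n) F,
      (∑ X : Matrix (Fin n) (Fin n) F, ∑ B : Matrix (Fin n) (Fin n) F,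
          (a A * conj (b B)) * (conj (uMat φ X A) * uMat φ X B))
        = a A * conj (b A) * (Fintype.card (Matrix (Fin n) (Fin n) F) : ℂ) := by
    intro A
    rw [Finset.sum_comm]
    have : ∀ B : Matrix (Fin n) (Fin n) F,
        ∑ X : Matrix (Fin n) (Fin n) F, (a A * conj (b B)) * (conj (uMat φ X A) * uMat φ X B)
          = (a A * conj (b B)) * (if B = A then (Fintype.card (Matrix (Fin n) (Fin n) F) : ℂ) else 0) := by
      intro B
      rw [← Finset.mul_sum, sum_conj_char_mul φ hφ]
    simp_rw [this, mul_ite, mul_zero]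
    rw [Finset.sum_ite_eq' Finset.univ A
      (fun B => a A * conj (b B) * (Fintype.card (Matrix (Fin n) (Fin n) F) : ℂ))]
    simp
  simp_rw [step2]
  rw [← Finset.sum_mul, mul_comm]

private noncomputable instance instWFin (U : Submodule F (Fin n → F)) :
    Fintype (U →ₗ[F] (Fin n → F)) :=
  Fintype.ofInjective DFunLike.coe DFunLike.coe_injective

/-- The restriction map `L(V,V) → L(U,V)` as a linear map. -/
private noncomputable def Rres (U : Submodule F (Fin n → F)) :
    Matrix (Fin n) (Fin n) F →ₗ[F] (U →ₗ[F] (Fin n → F)) where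
  toFun A := (Matrix.toLin' A).domRestrict U
  map_add' A B := by ext u; simp [Matrix.toLin'_apply, Matrix.add_mulVec]
  map_smul' c A := by ext u; simp [Matrix.toLin'_apply, Matrix.smul_mulVec]

private lemma Rres_apply (U : Submodule F (Fin n → F)) (A : Matrix (Fin n) (Fin n) F) :
    Rres U A = (Matrix.toLin' A).domRestrict U := rfl

private lemma Rres_surj (U : Submodule F (Fin n → F)) :
    Function.Surjective (Rres (F := F) (n := n) U) := by
  intro T
  obtain ⟨gext, hgext⟩ := LinearMap.exists_extend T
  refine ⟨Matrix.toLin'.symm gext, ?_⟩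
  rw [Rres_apply, LinearEquiv.apply_symm_apply]
  exact hgext

private lemma Rres_mul (U : Submodule F (Fin n → F)) (B C : Matrix (Fin n) (Fin n) F) :
    Rres U (B * C) = (Matrix.toLin' B).comp (Rres U C) := by
  ext u
  simp [Rres_apply, Matrix.toLin'_mul]

/-- Fibers of a linear surjection are in bijection with the kernel. -/
private def fiberEquiv {M W : Type} [AddCommGroup M] [Module F M] [AddCommGroup W] [Module F W]
    (R : M →ₗ[F] W) (T : W) (A₀ : M) (hA₀ : R A₀ = T) :
    {A : M // R A = T} ≃ LinearMap.ker R where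
  toFun A := ⟨A.1 - A₀, by rw [LinearMap.mem_ker, map_sub, A.2, hA₀, sub_self]⟩
  invFun C := ⟨C.1 + A₀, by rw [map_add, LinearMap.mem_ker.mp C.2, hA₀, zero_add]⟩
  left_inv A := Subtype.ext (by simp)
  right_inv C := Subtype.ext (by simp)

private lemma card_fiber_Rres (U : Submodule F (Fin n → F)) (T : U →ₗ[F] (Fin n → F)) :
    Fintype.card {A : Matrix (Fin n) (Fin n) F // Rres U A = T}
      = Fintype.card (LinearMap.ker (Rres (F := F) (n := n) U)) := by
  obtain ⟨A₀, hA₀⟩ := Rres_surj U T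
  exact Fintype.card_congr (fiberEquiv (Rres U) T A₀ hA₀)

private lemma card_matrix_eq (U : Submodule F (Fin n → F)) :
    Fintype.card (Matrix (Fin n) (Fin n) F)
      = Fintype.card (U →ₗ[F] (Fin n → F))
          * Fintype.card (LinearMap.ker (Rres (F := F) (n := n) U)) := by
  rw [← Fintype.card_congr (Equiv.sigmaFiberEquiv (Rres (F := F) (n := n) U)),
    Fintype.card_sigma]
  simp_rw [card_fiber_Rres]
  rw [Finset.sum_const, Finset.card_univ, smul_eq_mul]

private lemma Rres_coe_mul (U : Submodule F (Fin n → F))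
    (B C : Matrix.SpecialLinearGroup (Fin n) F) :
    Rres U ((B * C : Matrix.SpecialLinearGroup (Fin n) F) : Matrix (Fin n) (Fin n) F)
      = (Matrix.toLin' (B : Matrix (Fin n) (Fin n) F)).comp
          (Rres U (C : Matrix (Fin n) (Fin n) F)) := by
  rw [Matrix.SpecialLinearGroup.coe_mul, Rres_mul]

private lemma Rres_SL_cancel (U : Submodule F (Fin n → F))
    (B : Matrix.SpecialLinearGroup (Fin n) F) (C C' : Matrix.SpecialLinearGroup (Fin n) F)
    (h : Rres U ((B * C : Matrix.SpecialLinearGroup (Fin n) F) : Matrix (Fin n) (Fin n) F)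
       = Rres U ((B * C' : Matrix.SpecialLinearGroup (Fin n) F) : Matrix (Fin n) (Fin n) F)) :
    Rres U (C : Matrix (Fin n) (Fin n) F) = Rres U (C' : Matrix (Fin n) (Fin n) F) := by
  have h2 := congrArg
    (fun T => (Matrix.toLin' ((B⁻¹ : Matrix.SpecialLinearGroup (Fin n) F) : Matrix (Fin n) (Fin n) F)).comp T) h
  simp only [← Rres_coe_mul] at h2
  rw [← mul_assoc, ← mul_assoc, inv_mul_cancel] at h2
  simp only [one_mul] at h2
  exact h2

private def slFiberEquiv (U : Submodule F (Fin n → F))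
    (B₀ : Matrix.SpecialLinearGroup (Fin n) F) :
    {B : Matrix.SpecialLinearGroup (Fin n) F //
        Rres U (B : Matrix (Fin n) (Fin n) F) = Rres U (B₀ : Matrix (Fin n) (Fin n) F)}
      ≃ {B : Matrix.SpecialLinearGroup (Fin n) F //
        Rres U (B : Matrix (Fin n) (Fin n) F)
          = Rres U ((1 : Matrix.SpecialLinearGroup (Fin n) F) : Matrix (Fin n) (Fin n) F)} where
  toFun B := ⟨B₀⁻¹ * B.1, by
    have h1 : Rres U ((B₀ * (B₀⁻¹ * B.1) : Matrix.SpecialLinearGroup (Fin n) F) : Matrix (Fin n) (Fin n) F)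
        = Rres U ((B₀ * 1 : Matrix.SpecialLinearGroup (Fin n) F) : Matrix (Fin n) (Fin n) F) := by
      rw [mul_inv_cancel_left, mul_one]; exact B.2
    exact Rres_SL_cancel U B₀ _ _ h1⟩
  invFun B := ⟨B₀ * B.1, by
    rw [Rres_coe_mul, B.2, ← Rres_coe_mul, mul_one]⟩
  left_inv B := Subtype.ext (by simp [mul_inv_cancel_left])
  right_inv B := Subtype.ext (by simp [inv_mul_cancel_left])

/-- If the trace pairing of `X` vanishes on the kernel of restriction to `U`,
then the column space of `X` lies in `U`, so `rank X ≤ dim U`. -/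
private lemma rank_le_of_trace_eq_zero (U : Submodule F (Fin n → F)) (d : ℕ)
    (hU : Module.finrank F U = d) (X : Matrix (Fin n) (Fin n) F)
    (htr : ∀ C : Matrix (Fin n) (Fin n) F, Rres U C = 0 → (X * C).trace = 0) :
    X.rank ≤ d := by
  have hcol : ∀ k, (fun i => X i k) ∈ U := by
    intro k
    rw [← Subspace.forall_mem_dualAnnihilator_apply_eq_zero_iff U (fun i => X i k)]
    intro ℓ hℓ
    rw [Submodule.mem_dualAnnihilator] at hℓ
    set w : Fin n → F := fun m => ℓ (fun j => if m = j then 1 else 0) with hw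
    have hℓv : ∀ v : Fin n → F, ℓ v = ∑ m, v m * w m := by
      intro v
      rw [LinearMap.pi_apply_eq_sum_univ ℓ v]
      simp [hw, smul_eq_mul]
    -- the matrix with row k equal to w
    set C : Matrix (Fin n) (Fin n) F := fun a b => if a = k then w b else 0 with hC
    have hCker : Rres U C = 0 := by
      ext u a
      simp only [Rres_apply, LinearMap.domRestrict_apply, Matrix.toLin'_apply,
        LinearMap.zero_apply, Pi.zero_apply, Matrix.mulVec, dotProduct]
      by_cases ha : a = k
      · subst ha
        simp only [hC, if_pos, eq_self_iff_true, if_true]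
        have h0 := hℓ (u : Fin n → F) u.2
        rw [hℓv] at h0
        simpa [mul_comm] using h0
      · simp [hC, ha]
    have htr' := htr C hCker
    have htr2 : (X * C).trace = ∑ a, X a k * w a := by
      rw [Matrix.trace]
      simp only [Matrix.diag_apply, Matrix.mul_apply]
      rw [Finset.sum_comm]
      rw [Finset.sum_eq_single k]
      · apply Finset.sum_congr rfl; intro a _
        simp [hC]
      · intro b _ hb
        apply Finset.sum_eq_zero; intro a _
        simp [hC, hb]
      · intro h; exact absurd (Finset.mem_univ k) h
    rw [hℓv]
    rw [htr2] at htr'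
    exact htr'
  have hrange : LinearMap.range X.mulVecLin ≤ U := by
    rintro v ⟨y, rfl⟩
    rw [Matrix.mulVecLin_apply]
    have : X.mulVec y = ∑ k, y k • (fun i => X i k) := by
      funext i
      rw [Matrix.mulVec, dotProduct, Finset.sum_apply]
      apply Finset.sum_congr rfl; intro k _
      simp [mul_comm]
    rw [this]
    exact Submodule.sum_mem U fun k _ => Submodule.smul_mem U _ (hcol k)
  calc X.rank = Module.finrank F (LinearMap.range X.mulVecLin) := rfl
    _ ≤ Module.finrank F U := Submodule.finrank_mono hrange
    _ = d := hU

private lemma hhat_vanish (φ : AddChar F ℂ) (hφ : φ ≠ 1) (U : Submodule F (Fin n → F))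
    (d : ℕ) (hU : Module.finrank F U = d) (H₀ : (U →ₗ[F] (Fin n → F)) → ℂ)
    (X : Matrix (Fin n) (Fin n) F) (hX : ¬ X.rank ≤ d) :
    ∑ B : Matrix (Fin n) (Fin n) F, H₀ (Rres U B) * conj (uMat φ X B) = 0 := by
  have hex : ∃ C₀ : LinearMap.ker (Rres (F := F) (n := n) U),
      φ ((X * (C₀ : Matrix (Fin n) (Fin n) F)).trace) ≠ 1 := by
    have hnz : ∃ C, Rres U C = 0 ∧ (X * C).trace ≠ 0 := by
      by_contra hc; push_neg at hc
      exact hX (rank_le_of_trace_eq_zero U d hU X hc)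
    obtain ⟨C₁, hk, htne⟩ := hnz
    obtain ⟨t, ht⟩ := AddChar.ne_one_iff.mp hφ
    refine ⟨⟨(t * ((X * C₁).trace)⁻¹) • C₁, ?_⟩, ?_⟩
    · rw [LinearMap.mem_ker, _root_.map_smul, hk, smul_zero]
    · show φ ((X * ((t * ((X * C₁).trace)⁻¹) • C₁)).trace) ≠ 1
      rw [Matrix.mul_smul, Matrix.trace_smul, smul_eq_mul, mul_assoc,
        inv_mul_cancel₀ htne, mul_one]
      exact ht
  obtain ⟨C₀, hC₀⟩ := hex
  rw [← Fintype.sum_fiberwise (Rres (F := F) (n := n) U)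
    (fun B => H₀ (Rres U B) * conj (uMat φ X B))]
  apply Finset.sum_eq_zero
  intro T _
  obtain ⟨A₀, hA₀⟩ := Rres_surj U T
  have hfactor : ∑ B : {B : Matrix (Fin n) (Fin n) F // Rres U B = T},
      H₀ (Rres U B.1) * conj (uMat φ X B.1)
        = H₀ T * conj (∑ B : {B : Matrix (Fin n) (Fin n) F // Rres U B = T}, uMat φ X B.1) := by
    rw [map_sum, Finset.mul_sum]
    apply Finset.sum_congr rfl; intro B _; rw [B.2]
  rw [hfactor]
  have hz : ∑ B : {B : Matrix (Fin n) (Fin n) F // Rres U B = T}, uMat φ X B.1 = 0 := by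
    rw [Fintype.sum_equiv (fiberEquiv (Rres U) T A₀ hA₀)
      (fun B => uMat φ X B.1)
      (fun C => uMat φ X ((C : Matrix (Fin n) (Fin n) F) + A₀))
      (fun B => by simp [fiberEquiv, uMat])]
    have hsplit : ∀ C : LinearMap.ker (Rres (F := F) (n := n) U),
        uMat φ X ((C : Matrix (Fin n) (Fin n) F) + A₀)
          = φ ((X * (C : Matrix (Fin n) (Fin n) F)).trace) * φ ((X * A₀).trace) := by
      intro C
      rw [uMat, Matrix.mul_add, Matrix.trace_add, AddChar.map_add_eq_mul]
    simp_rw [hsplit]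
    rw [← Finset.sum_mul]
    have hz2 : ∑ C : LinearMap.ker (Rres (F := F) (n := n) U),
        φ ((X * (C : Matrix (Fin n) (Fin n) F)).trace) = 0 :=
      sum_char_lin φ
        (fun C : LinearMap.ker (Rres (F := F) (n := n) U) =>
          (X * (C : Matrix (Fin n) (Fin n) F)).trace)
        (fun a b => by simp [Matrix.mul_add, Matrix.trace_add])
        C₀ hC₀
    rw [hz2, zero_mul]
  rw [hz, map_zero, mul_zero]

private lemma core_ineq (φ : AddChar F ℂ) (hφ : φ ≠ 1) (d : ℕ)
    (f : Matrix.SpecialLinearGroup (Fin n) F → ℂ)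
    (U : Submodule F (Fin n → F)) (hU : Module.finrank F U = d)
    (g : (U →ₗ[F] (Fin n → F)) → ℂ)
    (hjunta : ∀ A : Matrix.SpecialLinearGroup (Fin n) F,
      f A = g ((Matrix.toLin' (A : Matrix (Fin n) (Fin n) F)).domRestrict U)) :
    (Fintype.card (Matrix.SpecialLinearGroup (Fin n) F) : ℝ) *
        (∑ B : Matrix.SpecialLinearGroup (Fin n) F, ‖f B‖ ^ 2)
      ≤ (Fintype.card (Matrix (Fin n) (Fin n) F) : ℝ) *
        (∑ A : Matrix (Fin n) (Fin n) F,
          ‖∑ X ∈ Finset.univ.filter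
              (fun X : Matrix (Fin n) (Fin n) F => X.rank ≤ d),
            matHat φ (jExt f) X * uMat φ X A‖ ^ 2) := by
  classical
  set H₀ : (U →ₗ[F] (Fin n → F)) → ℂ := fun T =>
    if T ∈ Set.range (fun B : Matrix.SpecialLinearGroup (Fin n) F =>
      Rres U (B : Matrix (Fin n) (Fin n) F)) then g T else 0 with hH₀
  -- values on SL
  have hfeq : ∀ B : Matrix.SpecialLinearGroup (Fin n) F,
      H₀ (Rres U (B : Matrix (Fin n) (Fin n) F)) = f B := by
    intro B
    rw [hH₀]
    simp only []
    rw [if_pos ⟨B, rfl⟩, hjunta B, Rres_apply]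
  set S := ∑ B : Matrix.SpecialLinearGroup (Fin n) F, ‖f B‖ ^ 2 with hSdef
  set Tr := ∑ A : Matrix (Fin n) (Fin n) F,
      ‖∑ X ∈ Finset.univ.filter (fun X : Matrix (Fin n) (Fin n) F => X.rank ≤ d),
        matHat φ (jExt f) X * uMat φ X A‖ ^ 2 with hTrdef
  set R₀ := ∑ T : (U →ₗ[F] (Fin n → F)), ‖H₀ T‖ ^ 2 with hR₀def
  set kM := Fintype.card (LinearMap.ker (Rres (F := F) (n := n) U)) with hkMdef
  set kG := Fintype.card {B : Matrix.SpecialLinearGroup (Fin n) F //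
      Rres U (B : Matrix (Fin n) (Fin n) F)
        = Rres U ((1 : Matrix.SpecialLinearGroup (Fin n) F) : Matrix (Fin n) (Fin n) F)} with hkGdef
  set wc := Fintype.card (U →ₗ[F] (Fin n → F)) with hwcdef
  have hS0 : 0 ≤ S := Finset.sum_nonneg fun B _ => sq_nonneg _
  have hTr0 : 0 ≤ Tr := Finset.sum_nonneg fun A _ => sq_nonneg _
  have hR₀0 : 0 ≤ R₀ := Finset.sum_nonneg fun T _ => sq_nonneg _
  -- (K1) inner product identity
  have hinner : ∑ A : Matrix (Fin n) (Fin n) F,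
      (∑ X ∈ Finset.univ.filter (fun X : Matrix (Fin n) (Fin n) F => X.rank ≤ d),
        matHat φ (jExt f) X * uMat φ X A) * conj (H₀ (Rres U A)) = (S : ℂ) := by
    have hswap : ∑ A : Matrix (Fin n) (Fin n) F,
        (∑ X ∈ Finset.univ.filter (fun X : Matrix (Fin n) (Fin n) F => X.rank ≤ d),
          matHat φ (jExt f) X * uMat φ X A) * conj (H₀ (Rres U A))
        = ∑ X ∈ Finset.univ.filter (fun X : Matrix (Fin n) (Fin n) F => X.rank ≤ d),
            matHat φ (jExt f) X *
              conj (∑ B : Matrix (Fin n) (Fin n) F, H₀ (Rres U B) * conj (uMat φ X B)) := by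
      simp_rw [Finset.sum_mul]
      rw [Finset.sum_comm]
      apply Finset.sum_congr rfl; intro X _
      rw [map_sum, Finset.mul_sum]
      apply Finset.sum_congr rfl; intro A _
      rw [_root_.map_mul, Complex.conj_conj]
      ring
    rw [hswap]
    have hext : ∑ X ∈ Finset.univ.filter (fun X : Matrix (Fin n) (Fin n) F => X.rank ≤ d),
        matHat φ (jExt f) X *
          conj (∑ B : Matrix (Fin n) (Fin n) F, H₀ (Rres U B) * conj (uMat φ X B))
        = ∑ X : Matrix (Fin n) (Fin n) F,
            matHat φ (jExt f) X *
              conj (∑ B : Matrix (Fin n) (Fin n) F, H₀ (Rres U B) * conj (uMat φ X B)) := by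
      apply Finset.sum_subset (Finset.subset_univ _)
      intro X _ hXf
      rw [hhat_vanish φ hφ U d hU H₀ X (by simpa using hXf), map_zero, mul_zero]
    rw [hext]
    have hNne : ((Fintype.card (Matrix (Fin n) (Fin n) F) : ℂ)) ≠ 0 := by
      exact_mod_cast (Fintype.card_pos (α := Matrix (Fin n) (Fin n) F)).ne'
    have hdiv : ∑ X : Matrix (Fin n) (Fin n) F,
        matHat φ (jExt f) X *
          conj (∑ B : Matrix (Fin n) (Fin n) F, H₀ (Rres U B) * conj (uMat φ X B))
        = (∑ X : Matrix (Fin n) (Fin n) F,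
            (∑ A : Matrix (Fin n) (Fin n) F, jExt f A * conj (uMat φ X A)) *
              conj (∑ B : Matrix (Fin n) (Fin n) F, H₀ (Rres U B) * conj (uMat φ X B)))
            / (Fintype.card (Matrix (Fin n) (Fin n) F) : ℂ) := by
      rw [Finset.sum_div]
      apply Finset.sum_congr rfl; intro X _
      rw [matHat, div_mul_eq_mul_div]
    rw [hdiv, plancherel φ hφ (jExt f) (fun B => H₀ (Rres U B)),
      mul_div_cancel_left₀ _ hNne]
    -- now identify with S
    have hsl : ∑ A : Matrix (Fin n) (Fin n) F, jExt f A * conj (H₀ (Rres U A))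
        = ∑ B : Matrix.SpecialLinearGroup (Fin n) F, f B * conj (f B) := by
      symm
      apply Fintype.sum_of_injective
        (fun B : Matrix.SpecialLinearGroup (Fin n) F => (B : Matrix (Fin n) (Fin n) F))
        (fun a b h => Subtype.ext h)
      · intro A hA
        have hdet : ¬ A.det = 1 := by
          intro hd
          exact hA ⟨(⟨A, hd⟩ : Matrix.SpecialLinearGroup (Fin n) F), rfl⟩
        rw [jExt, dif_neg hdet, zero_mul]
      · intro B
        rw [jExt, dif_pos B.2]
        rw [hfeq B]
        congr 1
    rw [hsl]
    have : ∀ B : Matrix.SpecialLinearGroup (Fin n) F,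
        f B * conj (f B) = ((‖f B‖ ^ 2 : ℝ) : ℂ) := by
      intro B; rw [Complex.mul_conj']; norm_num
    rw [Finset.sum_congr rfl (fun B _ => this B), hSdef]
    norm_cast
  -- (K2) norm of h
  have hsumh : ∑ A : Matrix (Fin n) (Fin n) F, ‖H₀ (Rres U A)‖ ^ 2 = (kM : ℝ) * R₀ := by
    rw [← Fintype.sum_fiberwise (Rres (F := F) (n := n) U)
      (fun A => ‖H₀ (Rres U A)‖ ^ 2)]
    have hfib : ∀ T : (U →ₗ[F] (Fin n → F)),
        ∑ A : {A : Matrix (Fin n) (Fin n) F // Rres U A = T}, ‖H₀ (Rres U A.1)‖ ^ 2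
          = (kM : ℝ) * ‖H₀ T‖ ^ 2 := by
      intro T
      have hcongr : ∀ A : {A : Matrix (Fin n) (Fin n) F // Rres U A = T},
          ‖H₀ (Rres U A.1)‖ ^ 2 = ‖H₀ T‖ ^ 2 := fun A => by rw [A.2]
      rw [Finset.sum_congr rfl (fun A _ => hcongr A), Finset.sum_const, Finset.card_univ,
        card_fiber_Rres, nsmul_eq_mul, hkMdef]
    rw [Finset.sum_congr rfl (fun T _ => hfib T), ← Finset.mul_sum, hR₀def]
  -- (K3) S = kG * R₀
  have hSkG : S = (kG : ℝ) * R₀ := by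
    rw [hSdef]
    have h1 : ∀ B : Matrix.SpecialLinearGroup (Fin n) F,
        ‖f B‖ ^ 2 = ‖H₀ (Rres U (B : Matrix (Fin n) (Fin n) F))‖ ^ 2 := fun B => by
      rw [hfeq B]
    rw [Finset.sum_congr rfl (fun B _ => h1 B)]
    rw [← Fintype.sum_fiberwise
      (fun B : Matrix.SpecialLinearGroup (Fin n) F => Rres U (B : Matrix (Fin n) (Fin n) F))
      (fun B : Matrix.SpecialLinearGroup (Fin n) F =>
        ‖H₀ (Rres U (B : Matrix (Fin n) (Fin n) F))‖ ^ 2)]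
    have hfib : ∀ T : (U →ₗ[F] (Fin n → F)),
        ∑ B : {B : Matrix.SpecialLinearGroup (Fin n) F //
            Rres U (B : Matrix (Fin n) (Fin n) F) = T},
          ‖H₀ (Rres U (B.1 : Matrix (Fin n) (Fin n) F))‖ ^ 2
          = (kG : ℝ) * ‖H₀ T‖ ^ 2 := by
      intro T
      have hcongr : ∀ B : {B : Matrix.SpecialLinearGroup (Fin n) F //
          Rres U (B : Matrix (Fin n) (Fin n) F) = T},
          ‖H₀ (Rres U (B.1 : Matrix (Fin n) (Fin n) F))‖ ^ 2 = ‖H₀ T‖ ^ 2 := fun B => by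
        rw [B.2]
      rw [Finset.sum_congr rfl (fun B _ => hcongr B), Finset.sum_const, Finset.card_univ,
        nsmul_eq_mul]
      by_cases hT : ∃ B₀ : Matrix.SpecialLinearGroup (Fin n) F,
          Rres U (B₀ : Matrix (Fin n) (Fin n) F) = T
      · obtain ⟨B₀, hB₀⟩ := hT
        subst hB₀
        rw [Fintype.card_congr (slFiberEquiv U B₀), hkGdef]
      · have hH0 : H₀ T = 0 := by
          rw [hH₀]
          exact if_neg (fun hmem => hT (by obtain ⟨B, hB⟩ := hmem; exact ⟨B, hB⟩))
        rw [hH0]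
        simp
    rw [Finset.sum_congr rfl (fun T _ => hfib T), ← Finset.mul_sum, hR₀def]
  -- (K4) cG ≤ wc * kG
  have hcGle : (Fintype.card (Matrix.SpecialLinearGroup (Fin n) F) : ℝ) ≤ (wc : ℝ) * kG := by
    have hnat : Fintype.card (Matrix.SpecialLinearGroup (Fin n) F) ≤ wc * kG := by
      rw [← Fintype.card_congr (Equiv.sigmaFiberEquiv
        (fun B : Matrix.SpecialLinearGroup (Fin n) F => Rres U (B : Matrix (Fin n) (Fin n) F))),
        Fintype.card_sigma]
      have hle : ∀ T : (U →ₗ[F] (Fin n → F)),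
          Fintype.card {B : Matrix.SpecialLinearGroup (Fin n) F //
            Rres U (B : Matrix (Fin n) (Fin n) F) = T} ≤ kG := by
        intro T
        by_cases hT : ∃ B₀ : Matrix.SpecialLinearGroup (Fin n) F,
            Rres U (B₀ : Matrix (Fin n) (Fin n) F) = T
        · obtain ⟨B₀, hB₀⟩ := hT
          subst hB₀
          exact le_of_eq (Fintype.card_congr (slFiberEquiv U B₀))
        · have hempty : IsEmpty {B : Matrix.SpecialLinearGroup (Fin n) F //
              Rres U (B : Matrix (Fin n) (Fin n) F) = T} := ⟨fun B => hT ⟨B.1, B.2⟩⟩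
          rw [Fintype.card_eq_zero]
          exact Nat.zero_le _
      calc ∑ T : (U →ₗ[F] (Fin n → F)), Fintype.card {B : Matrix.SpecialLinearGroup (Fin n) F //
            Rres U (B : Matrix (Fin n) (Fin n) F) = T}
          ≤ ∑ _T : (U →ₗ[F] (Fin n → F)), kG := Finset.sum_le_sum (fun T _ => hle T)
        _ = wc * kG := by rw [Finset.sum_const, Finset.card_univ, smul_eq_mul, hwcdef]
    exact_mod_cast hnat
  -- (K5) N = wc * kM
  have hNeq : (Fintype.card (Matrix (Fin n) (Fin n) F) : ℝ) = (wc : ℝ) * kM := by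
    exact_mod_cast congrArg (Nat.cast (R := ℝ)) (card_matrix_eq U)
  -- (K6) Cauchy-Schwarz
  have hCS : S ^ 2 ≤ Tr * ((kM : ℝ) * R₀) := by
    have habs : S = ‖∑ A : Matrix (Fin n) (Fin n) F,
        (∑ X ∈ Finset.univ.filter (fun X : Matrix (Fin n) (Fin n) F => X.rank ≤ d),
          matHat φ (jExt f) X * uMat φ X A) * conj (H₀ (Rres U A))‖ := by
      rw [hinner, Complex.norm_real, Real.norm_eq_abs, abs_of_nonneg hS0]
    have htri : ‖∑ A : Matrix (Fin n) (Fin n) F,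
        (∑ X ∈ Finset.univ.filter (fun X : Matrix (Fin n) (Fin n) F => X.rank ≤ d),
          matHat φ (jExt f) X * uMat φ X A) * conj (H₀ (Rres U A))‖
        ≤ ∑ A : Matrix (Fin n) (Fin n) F,
            ‖∑ X ∈ Finset.univ.filter (fun X : Matrix (Fin n) (Fin n) F => X.rank ≤ d),
              matHat φ (jExt f) X * uMat φ X A‖ * ‖H₀ (Rres U A)‖ := by
      refine (norm_sum_le _ _).trans (le_of_eq (Finset.sum_congr rfl fun A _ => ?_))
      rw [norm_mul, RCLike.norm_conj]
    have hcs := Finset.sum_mul_sq_le_sq_mul_sq Finset.univ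
      (fun A : Matrix (Fin n) (Fin n) F =>
        ‖∑ X ∈ Finset.univ.filter (fun X : Matrix (Fin n) (Fin n) F => X.rank ≤ d),
          matHat φ (jExt f) X * uMat φ X A‖)
      (fun A : Matrix (Fin n) (Fin n) F => ‖H₀ (Rres U A)‖)
    have hstep1 : S ^ 2 ≤ (∑ A : Matrix (Fin n) (Fin n) F,
        ‖∑ X ∈ Finset.univ.filter (fun X : Matrix (Fin n) (Fin n) F => X.rank ≤ d),
          matHat φ (jExt f) X * uMat φ X A‖ * ‖H₀ (Rres U A)‖) ^ 2 := by
      apply pow_le_pow_left₀ hS0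
      rw [habs]
      exact htri
    refine hstep1.trans (hcs.trans (le_of_eq ?_))
    rw [← hTrdef, hsumh]
  -- (K7) conclusion
  clear_value S Tr R₀ kM kG wc
  rcases eq_or_lt_of_le hR₀0 with hR0 | hRpos
  · have hSz : S = 0 := by rw [hSkG, ← hR0, mul_zero]
    rw [hSz, mul_zero]
    exact mul_nonneg (Nat.cast_nonneg _) hTr0
  · have h1 : (kG : ℝ) ^ 2 * R₀ ≤ Tr * kM := by
      have h3 := hCS
      rw [hSkG] at h3
      have h2 : ((kG : ℝ) ^ 2 * R₀) * R₀ ≤ (Tr * kM) * R₀ := by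
        calc ((kG : ℝ) ^ 2 * R₀) * R₀ = ((kG : ℝ) * R₀) ^ 2 := by ring
          _ ≤ Tr * ((kM : ℝ) * R₀) := h3
          _ = (Tr * kM) * R₀ := by ring
      exact le_of_mul_le_mul_right h2 hRpos
    calc (Fintype.card (Matrix.SpecialLinearGroup (Fin n) F) : ℝ) * S
        ≤ ((wc : ℝ) * kG) * ((kG : ℝ) * R₀) := by
          rw [hSkG]
          apply mul_le_mul hcGle le_rfl (mul_nonneg (Nat.cast_nonneg _) hR₀0)
            (mul_nonneg (Nat.cast_nonneg _) (Nat.cast_nonneg _))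
      _ = (wc : ℝ) * ((kG : ℝ) ^ 2 * R₀) := by ring
      _ ≤ (wc : ℝ) * (Tr * kM) := by
          apply mul_le_mul_of_nonneg_left h1 (Nat.cast_nonneg _)
      _ = (Fintype.card (Matrix (Fin n) (Fin n) F) : ℝ) * Tr := by rw [hNeq]; ring


/-- Juntas have large low-degree Fourier weight: if `f ∈ L²(SL_n(F_q))` is a `d`-junta
(it factors through the restriction `A ↦ A|_U` for a `d`-dimensional `U ≤ F_q^n`), then
`(|G|/|L(V,V)|)·‖f‖₂ ≤ ‖j(f)^{≤d}‖₂`, where `j(f)^{≤d}` is the Fourier projection of the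
zero-extension `j(f)` onto characters `u_X` with `rank X ≤ d`, and the norms are with
respect to the uniform measures on `G = SL_n(F_q)` and on `L(V,V)`. -/
theorem stmt_14 (φ : AddChar F ℂ) (hφ : φ ≠ 1) (d : ℕ)
    (f : Matrix.SpecialLinearGroup (Fin n) F → ℂ)
    (U : Submodule F (Fin n → F)) (hU : Module.finrank F U = d)
    (g : (U →ₗ[F] (Fin n → F)) → ℂ)
    (hjunta : ∀ A : Matrix.SpecialLinearGroup (Fin n) F,
      f A = g ((Matrix.toLin' (A : Matrix (Fin n) (Fin n) F)).domRestrict U)) :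
    ((Fintype.card (Matrix.SpecialLinearGroup (Fin n) F) : ℝ) /
        (Fintype.card (Matrix (Fin n) (Fin n) F) : ℝ)) *
      Real.sqrt ((∑ B : Matrix.SpecialLinearGroup (Fin n) F, ‖f B‖ ^ 2) /
        (Fintype.card (Matrix.SpecialLinearGroup (Fin n) F) : ℝ)) ≤
      Real.sqrt ((∑ A : Matrix (Fin n) (Fin n) F,
          ‖∑ X ∈ Finset.univ.filter
              (fun X : Matrix (Fin n) (Fin n) F => X.rank ≤ d),
            matHat φ (jExt f) X * uMat φ X A‖ ^ 2) /
        (Fintype.card (Matrix (Fin n) (Fin n) F) : ℝ)) := by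

  classical
  have core := core_ineq φ hφ d f U hU g hjunta
  set S := ∑ B : Matrix.SpecialLinearGroup (Fin n) F, ‖f B‖ ^ 2 with hSdef
  set Tr := ∑ A : Matrix (Fin n) (Fin n) F,
      ‖∑ X ∈ Finset.univ.filter (fun X : Matrix (Fin n) (Fin n) F => X.rank ≤ d),
        matHat φ (jExt f) X * uMat φ X A‖ ^ 2 with hTrdef
  have hS0 : 0 ≤ S := Finset.sum_nonneg fun B _ => sq_nonneg _
  have hTr0 : 0 ≤ Tr := Finset.sum_nonneg fun A _ => sq_nonneg _
  clear_value S Tr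
  set cG := (Fintype.card (Matrix.SpecialLinearGroup (Fin n) F) : ℝ) with hcGdef
  set N := (Fintype.card (Matrix (Fin n) (Fin n) F) : ℝ) with hNdef
  have hcGpos : 0 < cG := by
    rw [hcGdef]; exact_mod_cast Fintype.card_pos
  have hNpos : 0 < N := by
    rw [hNdef]; exact_mod_cast Fintype.card_pos
  clear_value cG N
  have hkey : cG / N * Real.sqrt (S / cG) = Real.sqrt (cG * S / N ^ 2) := by
    have heq : cG * S / N ^ 2 = (cG / N) ^ 2 * (S / cG) := by
      field_simp
    rw [heq, Real.sqrt_mul (sq_nonneg _), Real.sqrt_sq (le_of_lt (div_pos hcGpos hNpos))]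
  rw [hkey]
  apply Real.sqrt_le_sqrt
  rw [div_le_div_iff₀ (by positivity) hNpos]
  calc cG * S * N ≤ (N * Tr) * N := mul_le_mul_of_nonneg_right core hNpos.le
    _ = Tr * N ^ 2 := by ring
end
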